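/- arXiv:math/0611692 — 5 statements merged into one kernel-verified Lean document; each statement's English description precedes it below -/
import Mathlib

section
/- Let a, b > 0, s > 0, and δ, γ ∈ ℝ. With the bandwidth h_n = (2a+2b)^{1/s}·(ln n + (α/s)·ln ln n)^{-1/s} where α = s - 2δ - 2γ - 1, the quantity h_n^{2δ}·exp(-2a/h_n^s) + h_n^{s-1-2γ}·exp(2b/h_n^s)/n is O(n^{-a/(a+b)}·(ln n)^{-ξ}) as n → ∞, where ξ = (2δb + (s-2γ-1)a)/((a+b)s). -/
/-!
Write `C = 2a + 2b` and `L = log n + (α/s) log log n`, so that `h^s = C / L`. Then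
`exp (t / h^s) = exp (t L / C) = n^(t/C) (log n)^(tα/(sC))` exactly, while `h^p = C^(p/s) L^(-p/s)`
and `L ~ log n`, so `h^p exp (t / h^s) = O(n^(t/C) (log n)^(tα/(sC) - p/s))`. For the bias
(`p = 2δ`, `t = -2a`) and the variance (`p = s - 1 - 2γ`, `t = 2b`, divided by `n`) both exponent
pairs come out as `(-a/(a+b), -ξ)`.
-/

open Real Filter Asymptotics

noncomputable def bandwidth (C s c x : ℝ) : ℝ :=
  C ^ (1 / s) * (log x + c * log (log x)) ^ (-(1 / s))

theorem bandwidth_rpow {C s c x : ℝ} (hC : 0 ≤ C) (hL : 0 ≤ log x + c * log (log x)) (p : ℝ) :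
    bandwidth C s c x ^ p = C ^ (p / s) * (log x + c * log (log x)) ^ (-(p / s)) := by
  rw [bandwidth, mul_rpow (rpow_nonneg hC _) (rpow_nonneg hL _), ← rpow_mul hC,
    ← rpow_mul hL]
  ring_nf

theorem exp_mul_log_add_mul_log_log {x : ℝ} (hx : 1 < x) (k c : ℝ) :
    exp (k * (log x + c * log (log x))) = x ^ k * log x ^ (k * c) := by
  rw [rpow_def_of_pos (by linarith), rpow_def_of_pos (log_pos hx), ← exp_add]
  ring_nf

theorem isEquivalent_log_add_mul_log_log (c : ℝ) :
    (fun x => log x + c * log (log x)) ~[atTop] log :=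
  IsEquivalent.refl.add_isLittleO
    ((isLittleO_log_id_atTop.comp_tendsto tendsto_log_atTop).const_mul_left c)

theorem isBigO_bandwidth_rpow_mul_exp {C s : ℝ} (hC : 0 ≤ C) (hs : s ≠ 0) (c p t : ℝ) :
    (fun x => bandwidth C s c x ^ p * exp (t / bandwidth C s c x ^ s))
      =O[atTop] fun x => x ^ (t / C) * log x ^ (t * c / C - p / s) := by
  set L := fun x => log x + c * log (log x)
  have hL : L ~[atTop] log := isEquivalent_log_add_mul_log_log c
  have hLpos : ∀ᶠ x in atTop, 0 < L x :=
    (hL.symm.tendsto_atTop tendsto_log_atTop).eventually_gt_atTop 0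
  have hlogpos : ∀ᶠ x in atTop, 0 < log x := tendsto_log_atTop.eventually_gt_atTop 0
  have hrpow : (fun x => L x ^ (-(p / s))) =O[atTop] fun x => log x ^ (-(p / s)) :=
    (hL.isTheta.rpow (hLpos.mono fun _ h => h.le) (hlogpos.mono fun _ h => h.le)).isBigO
  have hform : (fun x => bandwidth C s c x ^ p * exp (t / bandwidth C s c x ^ s)) =ᶠ[atTop]
      fun x => C ^ (p / s) * (L x ^ (-(p / s)) * (x ^ (t / C) * log x ^ (t / C * c))) := by
    filter_upwards [hLpos, eventually_gt_atTop 1] with x hLx hx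
    rw [bandwidth_rpow hC hLx.le, bandwidth_rpow hC hLx.le, div_self hs, rpow_one,
      rpow_neg_one, ← exp_mul_log_add_mul_log_log hx]
    field_simp
    rfl
  have htarget : (fun x => log x ^ (-(p / s)) * (x ^ (t / C) * log x ^ (t / C * c))) =ᶠ[atTop]
      fun x => x ^ (t / C) * log x ^ (t * c / C - p / s) := by
    filter_upwards [hlogpos] with x hx
    rw [mul_left_comm, ← rpow_add hx]
    ring_nf
  exact hform.trans_isBigO <|
    ((hrpow.mul (isBigO_refl _ _)).const_mul_left _).trans_eventuallyEq htarget

/-- MISE bound in the case r = s: bias² + variance at the optimal bandwidth is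
`O(n^{-a/(a+b)} (log n)^{-ξ})` with `ξ = (2δb + (s-2γ-1)a)/((a+b)s)`. -/
theorem stmt1 (s a b δ γ : ℝ) (hs : 0 < s) (ha : 0 < a) (hb : 0 < b)
    (α ξ : ℝ) (hα : α = s - 2*δ - 2*γ - 1)
    (hξ : ξ = (2*δ*b + (s - 2*γ - 1)*a) / ((a+b)*s))
    (h : ℕ → ℝ)
    (hh : ∀ n : ℕ, h n = (2*a+2*b) ^ (1/s) *
      (Real.log n + (α/s) * Real.log (Real.log n)) ^ (-(1/s))) :
    (fun n : ℕ => (h n) ^ (2*δ) * Real.exp (-(2*a) / (h n) ^ s)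
        + (h n) ^ (s - 1 - 2*γ) * Real.exp (2*b / (h n) ^ s) / n)
      =O[atTop]
    (fun n : ℕ => (n : ℝ) ^ (-(a/(a+b))) * (Real.log n) ^ (-ξ)) := by
  have hC : 0 ≤ 2*a + 2*b := by positivity
  have hn_bias : -(2*a) / (2*a + 2*b) = -(a/(a+b)) := by field_simp
  have hn_var : 2*b / (2*a + 2*b) - 1 = -(a/(a+b)) := by field_simp; ring
  have hlog_bias : -(2*a) * (α/s) / (2*a + 2*b) - 2*δ/s = -ξ := by
    subst hα hξ; field_simp; ring
  have hlog_var : 2*b * (α/s) / (2*a + 2*b) - (s - 1 - 2*γ)/s = -ξ := by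
    subst hα hξ; field_simp; ring
  have hbias := isBigO_bandwidth_rpow_mul_exp hC hs.ne' (α/s) (2*δ) (-(2*a))
  rw [hn_bias, hlog_bias] at hbias
  have hvar := (isBigO_bandwidth_rpow_mul_exp hC hs.ne' (α/s) (s - 1 - 2*γ) (2*b)).mul
    (isBigO_refl (fun x : ℝ => x⁻¹) atTop)
  rw [hlog_var] at hvar
  have hvar' := hvar.trans_eventuallyEq <| (eventually_gt_atTop 0).mono fun x hx => by
    show x ^ (2*b / (2*a + 2*b)) * log x ^ (-ξ) * x⁻¹ = x ^ (-(a/(a+b))) * log x ^ (-ξ)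
    rw [← hn_var, rpow_sub_one hx.ne']
    ring
  obtain rfl : h = fun n : ℕ => bandwidth (2*a + 2*b) s (α/s) n := funext hh
  exact (hbias.add (hvar'.congr_left fun x => (div_eq_mul_inv _ _).symm)).comp_tendsto
    tendsto_natCast_atTop_atTop
end

section
/- Let 0 < λ < 1, k ∈ ℕ, α/s ∈ ℝ and b_0, ..., b_k ∈ ℝ. Define u_n = (α/s)·(ln ln n)/(ln n) + Σ_{i=0}^{k} b_i (ln n)^{(i+1)λ-(i+1)}. Then for every j with 2 ≤ j ≤ k+1, u_n^j = Σ_{i=j}^{k+1} Σ_{p_1+⋯+p_j=i, p_m ≥ 1} b_{p_1-1}⋯b_{p_j-1} (ln n)^{(λ-1)i} + o((ln n)^{(λ-1)(k+1)}) as n → ∞, where b_{k+1} := 0. -/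
open Real Filter Asymptotics Finset

/-!
Write `u n = ∑_{p=0}^{k+1} a_p (log n)` with `a_0 x = αs log x / x` and
`a_p x = b_{p-1} x^{(λ-1)p}` for `p ≥ 1`. Then `u n ^ j` expands into the products `∏_m a_{q_m}`
over all tuples `q : Fin j → {0, …, k+1}`. The tuples with all `q_m ≥ 1` and `∑ q_m ≤ k+1` are
exactly the compositions of some `i ∈ [j, k+1]` into `j` positive parts, and they produce the main
sum. Every other product equals `C (log x)^t x^{(λ-1)s - t}`, where `t` is the number of zero
entries and `s = ∑ q_m`, with `t ≥ 1` or `s ≥ k+2`. Since `λ < 1` and `(λ-1)(k+1) > -1`, its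
exponent is below `(λ-1)(k+1)`, so the logarithmic factor is absorbed and the product is
`o(x^{(λ-1)(k+1)})`.
-/

theorem isLittleO_log_pow_mul_rpow_atTop (t : ℕ) {β c : ℝ} (h : β < c) :
    (fun x : ℝ => log x ^ t * x ^ β) =o[atTop] fun x => x ^ c := by
  have hlog : (fun x : ℝ => log x ^ t) =o[atTop] fun x => x ^ (c - β) := by
    simpa using isLittleO_log_rpow_rpow_atTop (t : ℝ) (sub_pos.2 h)
  refine (hlog.mul_isBigO (isBigO_refl (fun x : ℝ => x ^ β) atTop)).congr' .rfl ?_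
  filter_upwards [eventually_gt_atTop 0] with x hx
  rw [← rpow_add hx, sub_add_cancel]

theorem error_exponent_lt {lam : ℝ} {k t s : ℕ} (hlam : lam < 1) (hk : -1 < (lam - 1) * (k + 1))
    (hts : 1 ≤ t ∨ k + 2 ≤ s) :
    (lam - 1) * s - t < (lam - 1) * (k + 1) := by
  rcases le_or_gt (k + 2) s with hs | hs
  · have : ((k : ℝ) + 2) ≤ s := by exact_mod_cast hs
    nlinarith [(t.cast_nonneg : (0 : ℝ) ≤ t)]
  · have ht : (1 : ℝ) ≤ t := by exact_mod_cast hts.resolve_right hs.not_ge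
    have : (0 : ℝ) ≤ s := s.cast_nonneg
    nlinarith

section

variable (lam αs : ℝ) (b : ℕ → ℝ)

noncomputable def correctionTerm (x : ℝ) : ℕ → ℝ
  | 0 => αs * log x / x
  | p + 1 => b p * x ^ ((lam - 1) * ((p : ℝ) + 1))

abbrev compositionTuples (j i : ℕ) : Finset (Fin j → ℕ) :=
  (Fintype.piFinset fun _ : Fin j => Icc 1 i).filter fun p => ∑ m, p m = i

theorem correctionTerm_of_ne_zero (x : ℝ) {p : ℕ} (hp : p ≠ 0) :
    correctionTerm lam αs b x p = b (p - 1) * x ^ ((lam - 1) * p) := by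
  obtain ⟨p, rfl⟩ := Nat.exists_eq_succ_of_ne_zero hp
  simp [correctionTerm]

theorem sum_range_correctionTerm (x : ℝ) (k : ℕ) :
    ∑ p ∈ range (k + 2), correctionTerm lam αs b x p =
      αs * log x / x + ∑ i ∈ range (k + 1), b i * x ^ (((i : ℝ) + 1) * lam - ((i : ℝ) + 1)) := by
  rw [sum_range_succ', add_comm]
  simp only [correctionTerm]
  congr 2 with i
  ring_nf

theorem prod_correctionTerm_of_ne_zero {x : ℝ} (hx : 0 < x) {ι : Type*} {s : Finset ι} {q : ι → ℕ}
    (hq : ∀ m ∈ s, q m ≠ 0) :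
    ∏ m ∈ s, correctionTerm lam αs b x (q m) =
      (∏ m ∈ s, b (q m - 1)) * x ^ ((lam - 1) * ∑ m ∈ s, q m) := by
  rw [prod_congr rfl fun m hm => correctionTerm_of_ne_zero lam αs b x (hq m hm), prod_mul_distrib,
    ← rpow_sum_of_pos hx, ← mul_sum, ← Nat.cast_sum]

theorem prod_correctionTerm {x : ℝ} (hx : 0 < x) {j : ℕ} (q : Fin j → ℕ) :
    ∏ m, correctionTerm lam αs b x (q m) =
      (αs ^ #{m | q m = 0} * ∏ m with q m ≠ 0, b (q m - 1)) *
        (log x ^ #{m | q m = 0} * x ^ ((lam - 1) * ∑ m, q m - #{m | q m = 0})) := by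
  rw [← prod_filter_mul_prod_filter_not univ (fun m => q m = 0)]
  have hzero : ∏ m with q m = 0, correctionTerm lam αs b x (q m) =
      (αs * log x / x) ^ #{m | q m = 0} := by
    rw [← prod_const]
    refine prod_congr rfl fun m hm => ?_
    rw [(mem_filter.1 hm).2, correctionTerm]
  have hpos : ∏ m with q m ≠ 0, correctionTerm lam αs b x (q m) =
      (∏ m with q m ≠ 0, b (q m - 1)) * x ^ ((lam - 1) * ∑ m, q m) := by
    rw [prod_correctionTerm_of_ne_zero lam αs b hx fun m hm => (mem_filter.1 hm).2,
      sum_filter_ne_zero]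
  rw [hzero, hpos, rpow_sub hx, rpow_natCast, div_pow, mul_pow]
  field_simp

theorem mem_biUnion_compositionTuples {j n : ℕ} {q : Fin j → ℕ} :
    q ∈ (Icc j n).biUnion (compositionTuples j) ↔ (∀ m, q m ≠ 0) ∧ ∑ m, q m ≤ n := by
  simp only [mem_biUnion, mem_filter, Fintype.mem_piFinset, mem_Icc]
  constructor
  · rintro ⟨i, ⟨-, hin⟩, hq, rfl⟩
    exact ⟨fun m => Nat.one_le_iff_ne_zero.1 (hq m).1, hin⟩
  · rintro ⟨hq, hn⟩
    have hpos : ∀ m, 1 ≤ q m := fun m => Nat.one_le_iff_ne_zero.2 (hq m)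
    refine ⟨∑ m, q m, ⟨?_, hn⟩, fun m => ⟨hpos m, single_le_sum (by simp) (mem_univ m)⟩, rfl⟩
    simpa using card_nsmul_le_sum univ q 1 fun m _ => hpos m

theorem sum_biUnion_compositionTuples_prod_correctionTerm {x : ℝ} (hx : 0 < x) (j : ℕ)
    (I : Finset ℕ) :
    ∑ q ∈ I.biUnion (compositionTuples j), ∏ m, correctionTerm lam αs b x (q m) =
      ∑ i ∈ I, (∑ q ∈ compositionTuples j i, ∏ m, b (q m - 1)) * x ^ ((lam - 1) * i) := by
  have hdisj : (I : Set ℕ).PairwiseDisjoint (compositionTuples j) := by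
    intro i₁ _ i₂ _ hne
    refine disjoint_left.2 fun q hq₁ hq₂ => hne ?_
    rw [← (mem_filter.1 hq₁).2, ← (mem_filter.1 hq₂).2]
  rw [sum_biUnion hdisj]
  refine sum_congr rfl fun i _ => ?_
  rw [sum_mul]
  refine sum_congr rfl fun q hq => ?_
  obtain ⟨hq, hsum⟩ := mem_filter.1 hq
  have hne : ∀ m ∈ univ, q m ≠ 0 := fun m _ =>
    Nat.one_le_iff_ne_zero.1 (mem_Icc.1 (Fintype.mem_piFinset.1 hq m)).1
  rw [prod_correctionTerm_of_ne_zero lam αs b hx hne, hsum]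

theorem isLittleO_prod_correctionTerm {k : ℕ} (hlam : lam < 1) (hk : -1 < (lam - 1) * (k + 1))
    {j : ℕ} {q : Fin j → ℕ} (hq : (∃ m, q m = 0) ∨ k + 2 ≤ ∑ m, q m) :
    (fun x => ∏ m, correctionTerm lam αs b x (q m)) =o[atTop]
      fun x => x ^ ((lam - 1) * (k + 1)) := by
  have hts : 1 ≤ #{m | q m = 0} ∨ k + 2 ≤ ∑ m, q m :=
    hq.imp_left fun ⟨m, hm⟩ => card_pos.2 ⟨m, mem_filter.2 ⟨mem_univ m, hm⟩⟩
  have hlittle := (isLittleO_log_pow_mul_rpow_atTop #{m | q m = 0}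
    (error_exponent_lt hlam hk hts)).const_mul_left
      (αs ^ #{m | q m = 0} * ∏ m with q m ≠ 0, b (q m - 1))
  refine hlittle.congr' ?_ .rfl
  filter_upwards [eventually_gt_atTop 0] with x hx
  rw [prod_correctionTerm lam αs b hx]

theorem isLittleO_pow_sum_correctionTerm_sub {k : ℕ} (hlam : lam < 1)
    (hk : -1 < (lam - 1) * (k + 1)) (j : ℕ) :
    (fun x : ℝ => (∑ p ∈ range (k + 2), correctionTerm lam αs b x p) ^ j -
        ∑ i ∈ Icc j (k + 1), (∑ q ∈ compositionTuples j i, ∏ m, b (q m - 1)) * x ^ ((lam - 1) * i))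
      =o[atTop] fun x => x ^ ((lam - 1) * (k + 1)) := by
  set P := Fintype.piFinset fun _ : Fin j => range (k + 2)
  set A := (Icc j (k + 1)).biUnion (compositionTuples j)
  have hAP : A ⊆ P := fun q hq => Fintype.mem_piFinset.2 fun m => mem_range.2 <|
    (single_le_sum (by simp) (mem_univ m)).trans_lt (Nat.lt_succ_of_le
      (mem_biUnion_compositionTuples.1 hq).2)
  have hrest : ∀ q ∈ P \ A, (∃ m, q m = 0) ∨ k + 2 ≤ ∑ m, q m := fun q hq => by
    by_contra! h
    exact (mem_sdiff.1 hq).2 (mem_biUnion_compositionTuples.2 ⟨h.1, by omega⟩)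
  refine (IsLittleO.fun_sum fun q hq =>
    isLittleO_prod_correctionTerm lam αs b hlam hk (hrest q hq)).congr' ?_ .rfl
  filter_upwards [eventually_gt_atTop 0] with x hx
  rw [sum_pow', ← sum_biUnion_compositionTuples_prod_correctionTerm lam αs b hx,
    sum_sdiff_eq_sub hAP]

end

theorem stmt6_general (lam : ℝ) (k : ℕ)
    (hlo : (k : ℝ) / (k + 1) < lam)
    (hl1 : lam < 1)
    (αs : ℝ) (b : ℕ → ℝ)
    (u : ℕ → ℝ)
    (hu : ∀ n : ℕ, u n = αs * Real.log (Real.log n) / Real.log n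
        + ∑ i ∈ Finset.range (k + 1),
            b i * (Real.log n) ^ (((i : ℝ) + 1) * lam - ((i : ℝ) + 1))) :
    ∀ j : ℕ, 2 ≤ j → j ≤ k + 1 →
      (fun n : ℕ => (u n) ^ j
          - ∑ i ∈ Finset.Icc j (k + 1),
              (∑ p ∈ (Fintype.piFinset fun _ : Fin j => Finset.Icc 1 i).filter
                  (fun p => ∑ m, p m = i),
                ∏ m, b (p m - 1)) * (Real.log n) ^ ((lam - 1) * (i : ℝ)))
        =o[atTop] (fun n : ℕ => (Real.log n) ^ ((lam - 1) * ((k : ℝ) + 1))) := by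
  intro j _ _
  have hk : -1 < (lam - 1) * (k + 1) := by
    rw [div_lt_iff₀ (by positivity)] at hlo
    linarith
  have hlog : Tendsto (fun n : ℕ => log n) atTop atTop :=
    tendsto_log_atTop.comp tendsto_natCast_atTop_atTop
  have hu' : u = fun n : ℕ => ∑ p ∈ range (k + 2), correctionTerm lam αs b (log n) p := by
    ext n
    rw [hu, sum_range_correctionTerm]
  rw [hu']
  exact (isLittleO_pow_sum_correctionTerm_sub lam αs b hl1 hk j).comp_tendsto hlog

/-- Expansion of powers of the correction sequence
`u n = (α/s) log log n / log n + Σ_{i=0}^k b_i (log n)^{(i+1)λ-(i+1)}`: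
for `2 ≤ j ≤ k+1`,
`u n ^ j = Σ_{i=j}^{k+1} Σ_{p_1+⋯+p_j=i, p_m ≥ 1} b_{p_1-1}⋯b_{p_j-1} (log n)^{(λ-1)i}
  + o((log n)^{(λ-1)(k+1)})`, with `b_{k+1} = 0`. -/
theorem stmt6 (lam : ℝ) (k : ℕ)
    (hlo : (k : ℝ) / (k + 1) < lam) (hhi : lam ≤ ((k : ℝ) + 1) / (k + 2))
    (hl0 : 0 < lam) (hl1 : lam < 1)
    (αs : ℝ) (b : ℕ → ℝ) (hbk : b (k + 1) = 0)
    (u : ℕ → ℝ)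
    (hu : ∀ n : ℕ, u n = αs * Real.log (Real.log n) / Real.log n
        + ∑ i ∈ Finset.range (k + 1),
            b i * (Real.log n) ^ (((i : ℝ) + 1) * lam - ((i : ℝ) + 1))) :
    ∀ j : ℕ, 2 ≤ j → j ≤ k + 1 →
      (fun n : ℕ => (u n) ^ j
          - ∑ i ∈ Finset.Icc j (k + 1),
              (∑ p ∈ (Fintype.piFinset fun _ : Fin j => Finset.Icc 1 i).filter
                  (fun p => ∑ m, p m = i),
                ∏ m, b (p m - 1)) * (Real.log n) ^ ((lam - 1) * (i : ℝ)))
        =o[atTop] (fun n : ℕ => (Real.log n) ^ ((lam - 1) * ((k : ℝ) + 1))) :=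
  stmt6_general lam k hlo hl1 αs b u hu
end

section
/- Let 0 < λ < 1 with k/(k+1) < λ ≤ (k+1)/(k+2) for some k ∈ ℕ, let a, b > 0, s > 0, α ∈ ℝ, and let b_0, ..., b_k be the coefficients defined by the recursion M_0 = ⋯ = M_k = 0 (with b_0 = -2a/(2b)^λ). Define h_n = (2b)^{1/s}·[ln n + (α/s)·ln ln n + Σ_{i=0}^{k} b_i (ln n)^{(i+1)λ-i}]^{-1/s}. Then with r = λs, exp(2b/h_n^s + 2a/h_n^r)·h_n^α = O(n) as n → ∞. -/
/-!
Put `L = log n`, `β = α / s`, `C = 2a / (2b)^λ` and let `T` be the bracket in the definition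
of `h n`, so that `2b / h^s = T` and `2a / h^r = C T^λ`; the claim is that
`T + C T^λ - β log T - L` is bounded above. With `x = L^(λ-1)` and `Q x = ∑_{i ≤ k} c_i x^i`
the correction terms equal `L^λ Q x`, and `T = L (1 + x Q x + β log L / L)`.
Expanding `(1 + y)^λ` by the binomial series, the recursion for the `c_i` says exactly that
`Q x + C (1 + x Q x)^λ` vanishes to order `k + 1` at `0`, so that
`L^λ (Q x + C (1 + x Q x)^λ) = O(L^(λ + (k+1)(λ-1))) = O(1)` because `λ ≤ (k+1)/(k+2)`.
The `β log L` term only moves `L^λ (1 + ·)^λ` by `O(L^λ log L / L) = o(1)`, and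
`log (T / L) → 0`.
-/

open Real Filter Asymptotics Finset Topology

theorem Ring.choose_real_eq_prod_div (μ : ℝ) (j : ℕ) :
    Ring.choose μ j = (∏ m ∈ range j, (μ - m)) / j.factorial := by
  rw [eq_div_iff (by positivity), mul_comm, ← nsmul_eq_mul,
    ← Ring.descPochhammer_eq_factorial_smul_choose, ← Polynomial.aeval_eq_smeval,
    Polynomial.aeval_def, ← Polynomial.eval_map, descPochhammer_map,
    descPochhammer_eval_eq_prod_range]

theorem isBigO_one_add_rpow_sub_sum (μ : ℝ) (n : ℕ) :
    (fun y : ℝ => (1 + y) ^ μ - ∑ j ∈ range n, Ring.choose μ j * y ^ j)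
      =O[𝓝 0] fun y => y ^ n := by
  have htaylor := Real.one_add_rpow_hasFPowerSeriesAt_zero (a := μ) |>.isBigO_sub_partialSum_pow n
  have hpartial (y : ℝ) :
      (binomialSeries ℝ μ).partialSum n y = ∑ j ∈ range n, Ring.choose μ j * y ^ j := by
    simp [FormalMultilinearSeries.partialSum, binomialSeries,
      FormalMultilinearSeries.coeff_ofScalars, mul_comm]
  simpa [hpartial, ← isBigO_abs_right (u := fun y : ℝ => y ^ n)] using htaylor

theorem sum_mul_pow_pow_eq_sum_piFinset {R : Type*} [CommSemiring R] (s : Finset ℕ)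
    (a : ℕ → R) (x : R) (j : ℕ) :
    (∑ d ∈ s, a d * x ^ d) ^ j =
      ∑ p ∈ Fintype.piFinset (fun _ : Fin j => s), (∏ m, a (p m)) * x ^ ∑ m, p m := by
  rw [← Fin.prod_const, prod_univ_sum]
  refine sum_congr rfl fun p _ => ?_
  rw [prod_mul_distrib, prod_pow_eq_pow_sum]

section CorrectionPolynomial

variable (c : ℕ → ℝ) (k : ℕ)

def corrPoly (x : ℝ) : ℝ := ∑ i ∈ range (k + 1), c i * x ^ i

def powCoeff (j i : ℕ) : ℝ :=
  ∑ p ∈ (Fintype.piFinset fun _ : Fin j => Icc 1 (k + 1)).filter (fun p => ∑ m, p m = i),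
    ∏ m, c (p m - 1)

theorem mul_corrPoly (x : ℝ) :
    x * corrPoly c k x = ∑ d ∈ Icc 1 (k + 1), c (d - 1) * x ^ d := by
  rw [corrPoly, Nat.range_succ_eq_Icc_zero, mul_sum,
    show Icc 1 (k + 1) = (Icc 0 k).map (addRightEmbedding 1) by simp, sum_map]
  refine sum_congr rfl fun i _ => ?_
  simp only [addRightEmbedding_apply, Nat.add_sub_cancel]
  ring

theorem pow_mul_corrPoly (x : ℝ) {j N : ℕ} (hN : j * (k + 1) < N) :
    (x * corrPoly c k x) ^ j = ∑ i ∈ range N, powCoeff c k j i * x ^ i := by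
  rw [mul_corrPoly, sum_mul_pow_pow_eq_sum_piFinset,
    ← sum_fiberwise_of_maps_to (g := fun p => ∑ m, p m) (t := range N)]
  · refine sum_congr rfl fun i _ => ?_
    rw [powCoeff, sum_mul]
    exact sum_congr rfl fun p hp => by rw [(mem_filter.mp hp).2]
  · intro p hp
    have hle : ∑ m, p m ≤ ∑ _m : Fin j, (k + 1) :=
      sum_le_sum fun m _ => (mem_Icc.mp (Fintype.mem_piFinset.mp hp m)).2
    simp only [sum_const, card_univ, Fintype.card_fin, smul_eq_mul] at hle
    exact mem_range.mpr (hle.trans_lt hN)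

theorem powCoeff_of_lt {j i : ℕ} (h : i < j) : powCoeff c k j i = 0 := by
  refine sum_eq_zero fun p hp => absurd (mem_filter.mp hp).2 (ne_of_gt ?_)
  have hge : ∑ _m : Fin j, 1 ≤ ∑ m, p m :=
    sum_le_sum fun m _ => (mem_Icc.mp (Fintype.mem_piFinset.mp (mem_filter.mp hp).1 m)).1
  simp only [sum_const, card_univ, Fintype.card_fin, smul_eq_mul, mul_one] at hge
  omega

theorem powCoeff_zero_left (i : ℕ) : powCoeff c k 0 i = if i = 0 then 1 else 0 := by
  rcases eq_or_ne i 0 with rfl | hi <;> simp [powCoeff, eq_comm, *]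

theorem powCoeff_eq_of_le {j i : ℕ} (hi : i ≤ k + 1) :
    powCoeff c k j i = ∑ p ∈ (Fintype.piFinset fun _ : Fin j => Icc 1 i).filter
      (fun p => ∑ m, p m = i), ∏ m, c (p m - 1) := by
  refine sum_congr (ext fun p => ?_) fun _ _ => rfl
  simp only [mem_filter, Fintype.mem_piFinset, mem_Icc]
  constructor
  · rintro ⟨hp, hsum⟩
    refine ⟨fun m => ⟨(hp m).1, ?_⟩, hsum⟩
    rw [← hsum]
    exact single_le_sum (f := p) (fun _ _ => Nat.zero_le _) (mem_univ m)
  · rintro ⟨hp, hsum⟩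
    exact ⟨fun m => ⟨(hp m).1, (hp m).2.trans hi⟩, hsum⟩

/-- The paper's conditions `M_0 = ⋯ = M_k = 0` on the coefficients, with `C = 2a / (2b)^λ`. -/
def BandwidthRecursion (C μ : ℝ) : Prop :=
  c 0 = -C ∧ ∀ i, 1 ≤ i → i ≤ k →
    c i + C * ∑ j ∈ Icc 1 i, Ring.choose μ j *
      ∑ p ∈ (Fintype.piFinset fun _ : Fin j => Icc 1 i).filter (fun p => ∑ m, p m = i),
        ∏ m, c (p m - 1) = 0

variable {c k}

theorem add_mul_sum_choose_mul_powCoeff_eq_zero {C μ : ℝ} (hrec : BandwidthRecursion c k C μ)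
    {i : ℕ} (hi : i ≤ k) :
    c i + C * ∑ j ∈ range (k + 1), Ring.choose μ j * powCoeff c k j i = 0 := by
  rcases Nat.eq_zero_or_pos i with rfl | hi0
  · rw [sum_eq_single_of_mem 0 (by simp) fun j _ hj => by
      rw [powCoeff_of_lt c k (Nat.pos_of_ne_zero hj), mul_zero]]
    simp [powCoeff_zero_left, hrec.1]
  · have hvanish : ∀ j ∈ range (k + 1), j ∉ Icc 1 i →
        Ring.choose μ j * powCoeff c k j i = 0 := by
      intro j _ hj
      rcases Nat.eq_zero_or_pos j with rfl | hj0
      · simp [powCoeff_zero_left, hi0.ne']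
      · rw [powCoeff_of_lt c k (show i < j by rw [mem_Icc] at hj; omega), mul_zero]
    rw [← sum_subset (fun j hj => mem_range.mpr (by have := (mem_Icc.mp hj).2; omega)) hvanish]
    convert hrec.2 i hi0 hi using 4 with j
    rw [powCoeff_eq_of_le c k (show i ≤ k + 1 by omega)]

theorem corrPoly_add_mul_sum_choose_eq_sum_Ico {C μ : ℝ} (hrec : BandwidthRecursion c k C μ)
    (x : ℝ) :
    corrPoly c k x + C * ∑ j ∈ range (k + 1), Ring.choose μ j * (x * corrPoly c k x) ^ j =
      ∑ i ∈ Ico (k + 1) (k * (k + 1) + 1),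
        C * (∑ j ∈ range (k + 1), Ring.choose μ j * powCoeff c k j i) * x ^ i := by
  have hkN : k + 1 ≤ k * (k + 1) + 1 :=
    Nat.succ_le_succ (Nat.le_mul_of_pos_right k (Nat.succ_pos k))
  have hjN : ∀ j ∈ range (k + 1), j * (k + 1) < k * (k + 1) + 1 := fun j hj =>
    Nat.lt_succ_of_le (Nat.mul_le_mul_right _ (Nat.lt_succ_iff.mp (mem_range.mp hj)))
  rw [sum_congr rfl fun j hj => by rw [pow_mul_corrPoly c k x (hjN j hj), mul_sum], sum_comm,
    mul_sum, ← sum_range_add_sum_Ico _ hkN, corrPoly, ← add_assoc, ← sum_add_distrib]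
  simp only [← mul_assoc, ← sum_mul, ← add_mul]
  rw [sum_eq_zero fun i hi => ?_, zero_add]
  rw [add_mul_sum_choose_mul_powCoeff_eq_zero hrec (Nat.lt_succ_iff.mp (mem_range.mp hi)),
    zero_mul]

theorem isBigO_corrPoly_add_mul_one_add_rpow {C μ : ℝ} (hrec : BandwidthRecursion c k C μ) :
    (fun x => corrPoly c k x + C * (1 + x * corrPoly c k x) ^ μ) =O[𝓝 0]
      fun x => x ^ (k + 1) := by
  have hpoly : (fun x => corrPoly c k x + C * ∑ j ∈ range (k + 1),
      Ring.choose μ j * (x * corrPoly c k x) ^ j) =O[𝓝 0] fun x => x ^ (k + 1) := by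
    simp_rw [corrPoly_add_mul_sum_choose_eq_sum_Ico hrec]
    refine IsBigO.fun_sum fun i hi => (isBigO_const_mul_self _ _ _).trans ?_
    rcases (mem_Ico.mp hi).1.eq_or_lt with rfl | hlt
    · exact isBigO_refl _ _
    · exact (isLittleO_pow_pow hlt).isBigO
  have hcont : Continuous (corrPoly c k) := by unfold corrPoly; fun_prop
  have hsmall : (fun x => x * corrPoly c k x) =O[𝓝 0] fun x => x := by
    simpa using (isBigO_refl (fun x : ℝ => x) _).mul
      (Filter.Tendsto.isBigO_one (F := ℝ) (hcont.tendsto 0))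
  have hcont' : Continuous fun x => x * corrPoly c k x := continuous_id.mul hcont
  have htaylor := ((isBigO_one_add_rpow_sub_sum μ (k + 1)).comp_tendsto
    (hcont'.tendsto' 0 0 (zero_mul _))).trans (hsmall.pow (k + 1))
  refine (hpoly.add (htaylor.const_mul_left C)).congr_left fun x => ?_
  simp only [Function.comp_apply]
  ring

end CorrectionPolynomial

theorem tendsto_rpow_sub_one_atTop {μ : ℝ} (hμ : μ < 1) :
    Tendsto (fun L : ℝ => L ^ (μ - 1)) atTop (𝓝 0) := by
  simpa using tendsto_rpow_neg_atTop (sub_pos.mpr hμ)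

theorem sum_mul_rpow_eq_rpow_mul_corrPoly (c : ℕ → ℝ) (k : ℕ) {L : ℝ} (hL : 0 < L)
    (μ : ℝ) :
    ∑ i ∈ range (k + 1), c i * L ^ (((i : ℝ) + 1) * μ - i) =
      L ^ μ * corrPoly c k (L ^ (μ - 1)) := by
  rw [corrPoly, mul_sum]
  refine sum_congr rfl fun i _ => ?_
  rw [← rpow_natCast, ← rpow_mul hL.le, mul_left_comm, ← rpow_add hL]
  ring_nf

theorem isBigO_rpow_mul_comp_rpow_sub_one {g : ℝ → ℝ} {k : ℕ}
    (hg : g =O[𝓝 0] fun x => x ^ (k + 1)) {μ : ℝ} (hμ1 : μ < 1)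
    (hμk : μ ≤ ((k : ℝ) + 1) / (k + 2)) :
    (fun L : ℝ => L ^ μ * g (L ^ (μ - 1))) =O[atTop] fun _ => (1 : ℝ) := by
  have hexp : μ + (μ - 1) * ((k : ℝ) + 1) ≤ 0 := by
    rw [le_div_iff₀ (by positivity)] at hμk
    linarith
  refine ((isBigO_refl (fun L : ℝ => L ^ μ) _).mul
    (hg.comp_tendsto (tendsto_rpow_sub_one_atTop hμ1))).trans (IsBigO.of_bound 1 ?_)
  filter_upwards [eventually_ge_atTop 1] with L hL
  have hL0 : 0 < L := one_pos.trans_le hL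
  rw [Function.comp_apply, ← rpow_natCast, ← rpow_mul hL0.le, ← rpow_add hL0, norm_one,
    mul_one, norm_of_nonneg (rpow_nonneg hL0.le _)]
  push_cast
  exact rpow_le_one_of_one_le_of_nonpos hL hexp

theorem isBigO_rpow_mul_one_add_rpow_sub {u v : ℝ → ℝ} (hu : Tendsto u atTop (𝓝 0))
    (hv : Tendsto v atTop (𝓝 0)) (huv : (u - v) =O[atTop] fun L => log L / L)
    {μ : ℝ} (hμ1 : μ < 1) :
    (fun L => L ^ μ * ((1 + u L) ^ μ - (1 + v L) ^ μ)) =O[atTop] fun _ => (1 : ℝ) := by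
  have hlip := Real.one_add_rpow_hasFPowerSeriesAt_zero (a := μ) |>.hasStrictFDerivAt.isBigO_sub
  have hdiff := (hlip.comp_tendsto (hu.prodMk_nhds hv)).trans huv
  have hlog := (isLittleO_log_rpow_atTop (sub_pos.mpr hμ1)).isBigO.mul
    (isBigO_refl (fun L : ℝ => L ^ (μ - 1)) atTop)
  refine ((isBigO_refl (fun L : ℝ => L ^ μ) _).mul hdiff).trans ?_
  refine hlog.congr' ?_ ?_
  · filter_upwards [eventually_gt_atTop 0] with L hL
    rw [rpow_sub_one hL.ne']
    ring
  · filter_upwards [eventually_gt_atTop 0] with L hL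
    rw [← rpow_add hL]
    simp

noncomputable def bandwidthBracket (c : ℕ → ℝ) (k : ℕ) (μ β L : ℝ) : ℝ :=
  L + β * log L + ∑ i ∈ range (k + 1), c i * L ^ (((i : ℝ) + 1) * μ - i)

theorem isBigO_bandwidthBracket_exponent {c : ℕ → ℝ} {k : ℕ} {C μ : ℝ} (β : ℝ)
    (hμ1 : μ < 1) (hμk : μ ≤ ((k : ℝ) + 1) / (k + 2)) (hrec : BandwidthRecursion c k C μ) :
    (∀ᶠ L in atTop, 0 < bandwidthBracket c k μ β L) ∧
      (fun L => bandwidthBracket c k μ β L + C * bandwidthBracket c k μ β L ^ μ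
        - β * log (bandwidthBracket c k μ β L) - L) =O[atTop] fun _ => (1 : ℝ) := by
  set x := fun L : ℝ => L ^ (μ - 1)
  set v := fun L => x L * corrPoly c k (x L)
  set u := fun L => v L + β * (log L / L)
  have hcont : Continuous fun y => y * corrPoly c k y := by unfold corrPoly; fun_prop
  have hv : Tendsto v atTop (𝓝 0) :=
    (hcont.tendsto' 0 0 (zero_mul _)).comp (tendsto_rpow_sub_one_atTop hμ1)
  have hu : Tendsto u atTop (𝓝 0) := by
    simpa using hv.add (isLittleO_log_id_atTop.tendsto_div_nhds_zero.const_mul β)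
  have hbracket : ∀ᶠ L in atTop, 0 < L ∧ 0 < 1 + u L ∧
      bandwidthBracket c k μ β L = L * (1 + u L) := by
    filter_upwards [eventually_gt_atTop 0, (hu.const_add 1).eventually_const_lt
      (by norm_num : (0 : ℝ) < 1 + 0)] with L hL hu1
    refine ⟨hL, hu1, ?_⟩
    simp only [bandwidthBracket, u, v, x]
    rw [sum_mul_rpow_eq_rpow_mul_corrPoly c k hL, rpow_sub_one hL.ne']
    field_simp
    ring
  have hmain := isBigO_rpow_mul_comp_rpow_sub_one
    (isBigO_corrPoly_add_mul_one_add_rpow hrec) hμ1 hμk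
  have hdiff := isBigO_rpow_mul_one_add_rpow_sub hu hv
    (((isBigO_refl (fun L => log L / L) atTop).const_mul_left β).congr_left
      fun L => by simp [u]) hμ1
  have hlog := ((hu.const_add 1).log (by norm_num)).isBigO_one (F := ℝ)
  refine ⟨hbracket.mono fun L hL => hL.2.2 ▸ mul_pos hL.1 hL.2.1,
    ((hmain.add (hdiff.const_mul_left C)).sub (hlog.const_mul_left β)).congr' ?_ .rfl⟩
  filter_upwards [hbracket] with L ⟨hL, hu1, hT⟩
  rw [hT, mul_rpow hL.le hu1.le, log_mul hL.ne' hu1.ne']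
  have hLx : L * L ^ (μ - 1) = L ^ μ := by rw [rpow_sub_one hL.ne']; field_simp
  have hLL : L * L⁻¹ = 1 := mul_inv_cancel₀ hL.ne'
  simp only [u, v, x]
  linear_combination (-corrPoly c k (L ^ (μ - 1))) * hLx - β * log L * hLL

theorem exp_div_rpow_add_div_rpow_mul_rpow {a b s α μ T h : ℝ} (hb : 0 < b) (hs : s ≠ 0)
    (hT : 0 < T) (hh : h = (2 * b) ^ (1 / s) * T ^ (-(1 / s))) :
    exp (2 * b / h ^ s + 2 * a / h ^ (μ * s)) * h ^ α =
      (2 * b) ^ (α / s) * exp (T + 2 * a / (2 * b) ^ μ * T ^ μ - α / s * log T) := by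
  have hpow (q : ℝ) : h ^ q = (2 * b) ^ (q / s) * T ^ (-(q / s)) := by
    rw [hh, mul_rpow (by positivity) (by positivity), ← rpow_mul (by positivity),
      ← rpow_mul hT.le]
    ring_nf
  have hs' : 2 * b / (2 * b * T⁻¹) = T := by field_simp
  have hr' : 2 * a / ((2 * b) ^ μ * (T ^ μ)⁻¹) = 2 * a / (2 * b) ^ μ * T ^ μ := by field_simp
  rw [hpow, hpow, hpow, div_self hs, mul_div_cancel_right₀ _ hs, rpow_one, rpow_neg_one,
    rpow_neg hT.le, hs', hr', rpow_def_of_pos hT (-(α / s)), mul_left_comm, ← exp_add]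
  ring_nf

theorem stmt8_general (lam : ℝ) (k : ℕ) (hl1 : lam < 1)
    (hhi : lam ≤ ((k : ℝ) + 1) / (k + 2))
    (a b s α : ℝ) (hb : 0 < b) (hs : 0 < s)
    (r : ℝ) (hr : r = lam * s)
    (c : ℕ → ℝ)
    (hc0 : c 0 = -(2 * a) / (2 * b) ^ lam)
    (hcrec : ∀ i : ℕ, 1 ≤ i → i ≤ k →
      c i + ((2 * a) / (2 * b) ^ lam) *
        (∑ j ∈ Finset.Icc 1 i,
          ((∏ m ∈ Finset.range j, (lam - m)) / (Nat.factorial j)) *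
          ∑ p ∈ (Fintype.piFinset fun _ : Fin j => Finset.Icc 1 i).filter
              (fun p => ∑ m, p m = i),
            ∏ m, c (p m - 1)) = 0)
    (h : ℕ → ℝ)
    (hh : ∀ n : ℕ, h n = (2 * b) ^ (1/s) *
      (Real.log n + (α/s) * Real.log (Real.log n)
        + ∑ i ∈ Finset.range (k + 1),
            c i * (Real.log n) ^ (((i : ℝ) + 1) * lam - (i : ℝ))) ^ (-(1/s))) :
    (fun n : ℕ => Real.exp (2*b / (h n) ^ s + 2*a / (h n) ^ r) * (h n) ^ α)
      =O[atTop] (fun n : ℕ => (n : ℝ)) := by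
  have hrec : BandwidthRecursion c k (2 * a / (2 * b) ^ lam) lam :=
    ⟨by rw [hc0, neg_div], by simpa only [← Ring.choose_real_eq_prod_div] using hcrec⟩
  obtain ⟨hpos, hbounded⟩ := isBigO_bandwidthBracket_exponent (α / s) hl1 hhi hrec
  have hlog : Tendsto (fun n : ℕ => log n) atTop atTop :=
    tendsto_log_atTop.comp tendsto_natCast_atTop_atTop
  have hexp := isBigO_exp_comp_exp_comp.2
    (isBoundedUnder_le_abs.1 ((isBigO_one_iff ℝ).1 (hbounded.comp_tendsto hlog))).1
  refine (hexp.const_mul_left ((2 * b) ^ (α / s))).congr' ?_ ?_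
  · filter_upwards [hlog.eventually hpos] with n hn
    rw [hr, exp_div_rpow_add_div_rpow_mul_rpow hb hs.ne' hn (hh n)]
  · filter_upwards [eventually_gt_atTop 0] with n hn
    exact exp_log (Nat.cast_pos.mpr hn)

/-- Verification of the bandwidth equation in the case `r < s`:
with the recursively defined coefficients `c_i`, the bandwidth
`h n = (2b)^{1/s} [log n + (α/s) log log n + Σ_{i=0}^k c_i (log n)^{(i+1)λ-i}]^{-1/s}`
satisfies `exp(2b/h^s + 2a/h^r) h^α = O(n)` with `r = λ s`. -/
theorem stmt8 (lam : ℝ) (k : ℕ) (hl0 : 0 < lam) (hl1 : lam < 1)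
    (hlo : (k : ℝ) / (k + 1) < lam) (hhi : lam ≤ ((k : ℝ) + 1) / (k + 2))
    (a b s α : ℝ) (ha : 0 < a) (hb : 0 < b) (hs : 0 < s)
    (r : ℝ) (hr : r = lam * s)
    (c : ℕ → ℝ)
    (hc0 : c 0 = -(2 * a) / (2 * b) ^ lam)
    (hck : c (k + 1) = 0)
    (hcrec : ∀ i : ℕ, 1 ≤ i → i ≤ k →
      c i + ((2 * a) / (2 * b) ^ lam) *
        (∑ j ∈ Finset.Icc 1 i,
          ((∏ m ∈ Finset.range j, (lam - m)) / (Nat.factorial j)) *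
          ∑ p ∈ (Fintype.piFinset fun _ : Fin j => Finset.Icc 1 i).filter
              (fun p => ∑ m, p m = i),
            ∏ m, c (p m - 1)) = 0)
    (h : ℕ → ℝ)
    (hh : ∀ n : ℕ, h n = (2 * b) ^ (1/s) *
      (Real.log n + (α/s) * Real.log (Real.log n)
        + ∑ i ∈ Finset.range (k + 1),
            c i * (Real.log n) ^ (((i : ℝ) + 1) * lam - (i : ℝ))) ^ (-(1/s))) :
    (fun n : ℕ => Real.exp (2*b / (h n) ^ s + 2*a / (h n) ^ r) * (h n) ^ α)
      =O[atTop] (fun n : ℕ => (n : ℝ)) :=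
  stmt8_general lam k hl1 hhi a b s α hb hs r hr c hc0 hcrec h hh
end

section
/- Let s > 0, b > 0, δ > 0, γ ∈ ℝ, a = 0 (ordinary smooth target of Sobolev index δ, supersmooth noise). Minimizing B(h) + V(h) where B(h) = h^{2δ} and V(h) = h^{s-1-2γ}·exp(2b/h^s)/n over h = h_n = (2b)^{1/s}(ln n - c ln ln n)^{-1/s} for suitable constant c yields B(h_n) + V(h_n) = O((ln n)^{-2δ/s}) as n → ∞. -/
open Real Filter Asymptotics

set_option maxHeartbeats 1000000 in
/-- Ordinary smooth target, supersmooth noise: with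
`h n = (2b)^{1/s} (log n - c log log n)^{-1/s}` for a suitable constant `c`,
the bias-variance sum `h^{2δ} + h^{s-1-2γ} exp(2b/h^s)/n` is `O((log n)^{-2δ/s})`. -/
theorem stmt9 (s b δ γ : ℝ) (hs : 0 < s) (hb : 0 < b) (hδ : 0 < δ) :
    ∃ c : ℝ, ∀ h : ℕ → ℝ,
      (∀ n : ℕ, h n = (2*b) ^ (1/s) *
          (Real.log n - c * Real.log (Real.log n)) ^ (-(1/s))) →
      (fun n : ℕ => (h n) ^ (2*δ)
          + (h n) ^ (s - 1 - 2*γ) * Real.exp (2*b / (h n) ^ s) / n)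
        =O[atTop] (fun n : ℕ => (Real.log n) ^ (-(2*δ)/s)) := by
  set t : ℝ := (s - 1 - 2*γ) / s with ht
  refine ⟨|t| + 2*δ/s + 1, ?_⟩
  intro h hh
  set c : ℝ := |t| + 2*δ/s + 1 with hc
  have hc0 : 0 < c := by
    rw [hc]
    have : 0 < 2*δ/s := by positivity
    have := abs_nonneg t
    linarith
  have hb2 : (0:ℝ) < 2*b := by linarith
  have hlogt : Tendsto (fun n : ℕ => Real.log n) atTop atTop :=
    Real.tendsto_log_atTop.comp tendsto_natCast_atTop_atTop
  have hll : (fun n : ℕ => Real.log (Real.log n)) =o[atTop] (fun n : ℕ => Real.log n) :=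
    Real.isLittleO_log_id_atTop.comp_tendsto hlogt
  have h1 : ∀ᶠ n : ℕ in atTop, ‖Real.log (Real.log n)‖ ≤ (1/(2*c)) * ‖Real.log n‖ :=
    hll.def (by positivity)
  have h2 : ∀ᶠ n : ℕ in atTop, 2 ≤ Real.log n := hlogt.eventually_ge_atTop 2
  rw [isBigO_iff]
  refine ⟨(2*b)^(2*δ/s) * 2^(2*δ/s) + (2*b)^t * 2^|t|, ?_⟩
  filter_upwards [h1, h2, eventually_ge_atTop 1] with n hn1 hn2 hn3
  have hnpos : (0:ℝ) < n := by exact_mod_cast hn3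
  set L : ℝ := Real.log n - c * Real.log (Real.log n) with hL
  have hlog1 : (1:ℝ) ≤ Real.log n := by linarith
  have habs : |Real.log n| = Real.log n := abs_of_nonneg (by linarith)
  have hllnn : 0 ≤ Real.log (Real.log n) := Real.log_nonneg hlog1
  have hcl : c * Real.log (Real.log n) ≤ (1/2) * Real.log n := by
    have h1' : Real.log (Real.log n) ≤ (1/(2*c)) * Real.log n := by
      have := hn1
      rwa [Real.norm_eq_abs, Real.norm_eq_abs, abs_of_nonneg hllnn, habs] at this
    have h1'' : c * Real.log (Real.log n) ≤ c * ((1/(2*c)) * Real.log n) :=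
      mul_le_mul_of_nonneg_left h1' hc0.le
    have h1''' : c * ((1/(2*c)) * Real.log n) = (1/2) * Real.log n := by
      field_simp
    linarith
  have hL1 : (1/2) * Real.log n ≤ L := by rw [hL]; linarith
  have hL2 : L ≤ Real.log n := by
    rw [hL]; nlinarith [mul_nonneg hc0.le hllnn]
  have hLpos : 0 < L := by linarith
  -- general rpow formula for h n
  have hpow : ∀ e : ℝ, (h n) ^ e = (2*b)^(e/s) * L^(-(e/s)) := by
    intro e
    rw [hh n, ← hL, Real.mul_rpow (Real.rpow_nonneg hb2.le _) (Real.rpow_nonneg hLpos.le _),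
      ← Real.rpow_mul hb2.le, ← Real.rpow_mul hLpos.le]
    rw [show (1/s)*e = e/s by ring, show (-(1/s))*e = -(e/s) by ring]
  -- the h^s term
  have hhs : 2*b / (h n)^s = L := by
    rw [hpow s]
    have h1 : s/s = 1 := div_self hs.ne'
    rw [h1, Real.rpow_one, Real.rpow_neg_one]
    field_simp
  have hexp : Real.exp (2*b / (h n)^s) = n * (Real.log n)^(-c) := by
    rw [hhs, hL, Real.exp_sub, Real.exp_log hnpos,
      Real.rpow_def_of_pos (by linarith : (0:ℝ) < Real.log n),
      show Real.log (Real.log n) * -c = -(c * Real.log (Real.log n)) by ring,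
      Real.exp_neg]
    ring
  -- bias term bound
  have hBval : (h n) ^ (2*δ) = (2*b)^(2*δ/s) * L^(-(2*δ/s)) := hpow (2*δ)
  have hBb : L^(-(2*δ/s)) ≤ 2^(2*δ/s) * (Real.log n)^(-(2*δ/s)) := by
    have hpe : (0:ℝ) < 2*δ/s := by positivity
    have e1 : L^(-(2*δ/s)) ≤ ((1/2) * Real.log n)^(-(2*δ/s)) :=
      Real.rpow_le_rpow_of_nonpos (by linarith) hL1 (by linarith)
    have e2 : ((1/2:ℝ) * Real.log n)^(-(2*δ/s))
        = 2^(2*δ/s) * (Real.log n)^(-(2*δ/s)) := by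
      rw [Real.mul_rpow (by norm_num) (by linarith),
        show ((1:ℝ)/2) = (2:ℝ)^(-1:ℝ) by rw [Real.rpow_neg_one]; norm_num,
        ← Real.rpow_mul (by norm_num : (0:ℝ) ≤ 2)]
      congr 1
      ring
    calc L^(-(2*δ/s)) ≤ ((1/2) * Real.log n)^(-(2*δ/s)) := e1
      _ = 2^(2*δ/s) * (Real.log n)^(-(2*δ/s)) := e2
  -- variance term
  have hVval : (h n) ^ (s - 1 - 2*γ) * Real.exp (2*b / (h n)^s) / n
      = (2*b)^t * L^(-t) * (Real.log n)^(-c) := by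
    rw [hpow (s - 1 - 2*γ), hexp, ← ht]
    field_simp [hnpos.ne']
  have hLt : L^(-t) ≤ 2^|t| * (Real.log n)^(-t) := by
    rcases le_or_gt t 0 with hts | hts
    · have e1 : L^(-t) ≤ (Real.log n)^(-t) :=
        Real.rpow_le_rpow hLpos.le hL2 (by linarith)
      have e2 : (1:ℝ) ≤ 2^|t| := Real.one_le_rpow (by norm_num) (abs_nonneg t)
      nlinarith [Real.rpow_nonneg (by linarith : (0:ℝ) ≤ Real.log n) (-t)]
    · have e1 : L^(-t) ≤ ((1/2) * Real.log n)^(-t) :=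
        Real.rpow_le_rpow_of_nonpos (by linarith) hL1 (by linarith)
      have e2 : ((1/2:ℝ) * Real.log n)^(-t) = 2^t * (Real.log n)^(-t) := by
        rw [Real.mul_rpow (by norm_num) (by linarith),
          show ((1:ℝ)/2) = (2:ℝ)^(-1:ℝ) by rw [Real.rpow_neg_one]; norm_num,
          ← Real.rpow_mul (by norm_num : (0:ℝ) ≤ 2)]
        congr 1
        ring
      rw [abs_of_pos hts]
      calc L^(-t) ≤ ((1/2) * Real.log n)^(-t) := e1
        _ = 2^t * (Real.log n)^(-t) := e2
  have hexpo : (Real.log n)^(-t) * (Real.log n)^(-c) ≤ (Real.log n)^(-(2*δ)/s) := by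
    rw [← Real.rpow_add (by linarith : (0:ℝ) < Real.log n)]
    apply Real.rpow_le_rpow_of_exponent_le hlog1
    have h3' : -t - c ≤ -(2*δ)/s := by
      rw [hc]
      have h2' : -t ≤ |t| := neg_le_abs t
      have h4 : -(2*δ)/s = -(2*δ/s) := by ring
      linarith
    linarith [h3']
  -- assemble
  have hBnn : 0 ≤ (h n) ^ (2*δ) := by rw [hBval]; positivity
  have hVnn : 0 ≤ (h n) ^ (s - 1 - 2*γ) * Real.exp (2*b / (h n)^s) / n := by
    rw [hVval]; positivity
  have hRnn : (0:ℝ) ≤ (Real.log n)^(-(2*δ)/s) := Real.rpow_nonneg (by linarith) _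
  rw [Real.norm_eq_abs, Real.norm_eq_abs, abs_of_nonneg (by linarith), abs_of_nonneg hRnn]
  have b1 : (h n) ^ (2*δ) ≤ (2*b)^(2*δ/s) * 2^(2*δ/s) * (Real.log n)^(-(2*δ)/s) := by
    rw [hBval]
    have := mul_le_mul_of_nonneg_left hBb (Real.rpow_nonneg hb2.le (2*δ/s))
    calc (2*b)^(2*δ/s) * L^(-(2*δ/s))
        ≤ (2*b)^(2*δ/s) * (2^(2*δ/s) * (Real.log n)^(-(2*δ/s))) := this
      _ = (2*b)^(2*δ/s) * 2^(2*δ/s) * (Real.log n)^(-(2*δ)/s) := by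
          rw [show -(2*δ)/s = -(2*δ/s) by ring]; ring
  have b2 : (h n) ^ (s - 1 - 2*γ) * Real.exp (2*b / (h n)^s) / n
      ≤ (2*b)^t * 2^|t| * (Real.log n)^(-(2*δ)/s) := by
    rw [hVval]
    have e1 : L^(-t) * (Real.log n)^(-c) ≤ 2^|t| * (Real.log n)^(-(2*δ)/s) := by
      calc L^(-t) * (Real.log n)^(-c)
          ≤ (2^|t| * (Real.log n)^(-t)) * (Real.log n)^(-c) := by
            apply mul_le_mul_of_nonneg_right hLt (Real.rpow_nonneg (by linarith) _)
        _ = 2^|t| * ((Real.log n)^(-t) * (Real.log n)^(-c)) := by ring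
        _ ≤ 2^|t| * (Real.log n)^(-(2*δ)/s) := by
            exact mul_le_mul_of_nonneg_left hexpo (Real.rpow_nonneg (by norm_num) _)
    calc (2*b)^t * L^(-t) * (Real.log n)^(-c)
        = (2*b)^t * (L^(-t) * (Real.log n)^(-c)) := by ring
      _ ≤ (2*b)^t * (2^|t| * (Real.log n)^(-(2*δ)/s)) :=
          mul_le_mul_of_nonneg_left e1 (Real.rpow_nonneg hb2.le _)
      _ = (2*b)^t * 2^|t| * (Real.log n)^(-(2*δ)/s) := by ring
  calc (h n) ^ (2*δ) + (h n) ^ (s - 1 - 2*γ) * Real.exp (2*b / (h n)^s) / n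
      ≤ (2*b)^(2*δ/s) * 2^(2*δ/s) * (Real.log n)^(-(2*δ)/s)
        + (2*b)^t * 2^|t| * (Real.log n)^(-(2*δ)/s) := add_le_add b1 b2
    _ = ((2*b)^(2*δ/s) * 2^(2*δ/s) + (2*b)^t * 2^|t|) * (Real.log n)^(-(2*δ)/s) := by ring
end

section
/- Let λ = 1/2 (so k = 0 since 0 < 1/2 ≤ 1/2), a, b > 0, s > 0, r = s/2, and α ∈ ℝ. With b_0 = -2a/(2b)^{1/2} and h_n = (2b)^{1/s}[ln n + (α/s)ln ln n + b_0 (ln n)^{1/2}]^{-1/s}, one has exp(2b/h_n^s + 2a/h_n^r)·h_n^α = O(n) as n → ∞. -/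
open Real Filter Asymptotics Topology

/-
Write `t = log n` and `L = t + (α/s) log t + b₀ √t` for the bracket in `h_n`, so `h_n^s = 2b/L`. The
choice of `b₀` makes `2a/h_n^{s/2} = -b₀ √L`, hence the exponent is
`L - b₀ √L = t + (α/s) log t + b₀ (√t - √L)` and, with `h_n^α = (2b)^{α/s} L^{-α/s}`,
`exp(…) h_n^α = n (2b)^{α/s} (t/L)^{α/s} exp(b₀ (√t - √L))`.
As `L ~ t`, `(t/L)^{α/s} → 1` and `√t - √L = (t - L)/(√t + √L) → -b₀/2`, so the ratio to `n` converges.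
-/

noncomputable def logRate (c β t : ℝ) : ℝ := t + c * log t + β * √t

lemma isLittleO_sqrt_id_atTop : (fun t : ℝ => √t) =o[atTop] id := by
  refine (isLittleO_iff_tendsto fun t ht => by simp [show t = 0 from ht]).2 ?_
  refine (tendsto_inv_atTop_zero.comp tendsto_sqrt_atTop).congr fun t => ?_
  simp [Real.sqrt_div_self]

lemma logRate_isEquivalent_id (c β : ℝ) : logRate c β ~[atTop] id := by
  have : (fun t => c * log t + β * √t) =o[atTop] id :=
    (isLittleO_log_id_atTop.const_mul_left c).add (isLittleO_sqrt_id_atTop.const_mul_left β)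
  refine this.congr_left fun t => ?_
  simp only [logRate, Pi.sub_apply, id]
  ring

lemma eventually_logRate_pos (c β : ℝ) : ∀ᶠ t in atTop, 0 < logRate c β t :=
  ((logRate_isEquivalent_id c β).symm.tendsto_atTop tendsto_id).eventually_gt_atTop 0

lemma tendsto_logRate_div_self (c β : ℝ) :
    Tendsto (fun t => logRate c β t / t) atTop (𝓝 1) :=
  (isEquivalent_iff_tendsto_one ((eventually_ne_atTop 0).mono fun _ h => h)).1
    (logRate_isEquivalent_id c β)

lemma tendsto_self_div_logRate (c β : ℝ) :
    Tendsto (fun t => t / logRate c β t) atTop (𝓝 1) :=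
  (isEquivalent_iff_tendsto_one ((eventually_logRate_pos c β).mono fun _ h => h.ne')).1
    (logRate_isEquivalent_id c β).symm

lemma tendsto_sqrt_sub_sqrt_logRate (c β : ℝ) :
    Tendsto (fun t => √t - √(logRate c β t)) atTop (𝓝 (-β / 2)) := by
  have hlog : Tendsto (fun t => log t / √t) atTop (𝓝 0) := by
    simpa only [← Real.sqrt_eq_rpow] using
      (isLittleO_log_rpow_atTop (by norm_num : (0:ℝ) < 1 / 2)).tendsto_div_nhds_zero
  have hsqrt : Tendsto (fun t => √(logRate c β t / t)) atTop (𝓝 1) := by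
    simpa using (tendsto_logRate_div_self c β).sqrt
  have hlim := ((hlog.const_mul c).add_const β).neg.div (tendsto_const_nhds.add hsqrt)
    (by norm_num : (1:ℝ) + 1 ≠ 0)
  rw [show -(c * 0 + β) / (1 + 1) = -β / 2 by ring] at hlim
  refine hlim.congr' ?_
  filter_upwards [eventually_gt_atTop 0, eventually_logRate_pos c β] with t ht hL
  have ht_sq := Real.mul_self_sqrt ht.le
  have hL_sq := Real.mul_self_sqrt hL.le
  have hLdef : logRate c β t = t + c * log t + β * √t := rfl
  rw [Pi.div_apply, Real.sqrt_div' _ ht.le, div_eq_iff (by positivity)]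
  field_simp
  linear_combination hL_sq - ht_sq + hLdef

lemma bandwidth_rpow_s13 {B L : ℝ} (hB : 0 ≤ B) (hL : 0 ≤ L) (s p : ℝ) :
    (B ^ (1 / s) * L ^ (-(1 / s))) ^ p = B ^ (p / s) * L ^ (-(p / s)) := by
  rw [Real.mul_rpow (Real.rpow_nonneg hB _) (Real.rpow_nonneg hL _), ← Real.rpow_mul hB,
    ← Real.rpow_mul hL]
  ring_nf

lemma exp_bandwidth_eq {a B s α β t h : ℝ} (hB : 0 < B) (hs : s ≠ 0)
    (hβ : β = -(2 * a) / B ^ ((1:ℝ) / 2)) (ht : 0 < t) (hL : 0 < logRate (α / s) β t)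
    (hh : h = B ^ (1 / s) * logRate (α / s) β t ^ (-(1 / s))) :
    exp (B / h ^ s + 2 * a / h ^ (s / 2)) * h ^ α = exp t * B ^ (α / s) *
      ((t / logRate (α / s) β t) ^ (α / s) * exp (β * (√t - √(logRate (α / s) β t)))) := by
  set L := logRate (α / s) β t with hLdef
  have hsq : B / h ^ s = L := by
    rw [hh, bandwidth_rpow_s13 hB.le hL.le, div_self hs, Real.rpow_one, Real.rpow_neg_one]
    field_simp
  have hsqrt : 2 * a / h ^ (s / 2) = -β * √L := by
    rw [hh, bandwidth_rpow_s13 hB.le hL.le, show s / 2 / s = 1 / 2 by field_simp, Real.rpow_neg hL.le,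
      hβ]
    simp only [← Real.sqrt_eq_rpow]
    field_simp
  have hexp : B / h ^ s + 2 * a / h ^ (s / 2) = t + log t * (α / s) + β * (√t - √L) := by
    rw [hsq, hsqrt, hLdef, logRate]
    ring
  rw [hexp, hh, bandwidth_rpow_s13 hB.le hL.le, Real.exp_add, Real.exp_add, ← Real.rpow_def_of_pos ht,
    Real.div_rpow ht.le hL.le, Real.rpow_neg hL.le]
  field_simp

lemma tendsto_bandwidth_factor (c β : ℝ) :
    Tendsto (fun t => (t / logRate c β t) ^ c * exp (β * (√t - √(logRate c β t)))) atTop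
      (𝓝 (exp (-(β ^ 2 / 2)))) := by
  have h := ((tendsto_self_div_logRate c β).rpow_const (p := c) (Or.inl one_ne_zero)).mul
    ((continuous_exp.tendsto _).comp ((tendsto_sqrt_sub_sqrt_logRate c β).const_mul β))
  rwa [one_rpow, one_mul, show β * (-β / 2) = -(β ^ 2 / 2) by ring] at h

theorem stmt13_general (a b s α : ℝ) (hb : 0 < b) (hs : 0 < s)
    (b0 : ℝ) (hb0 : b0 = -(2*a) / (2*b) ^ ((1:ℝ)/2))
    (h : ℕ → ℝ)
    (hh : ∀ n : ℕ, h n = (2*b) ^ (1/s) *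
      (Real.log n + (α/s) * Real.log (Real.log n)
        + b0 * (Real.log n) ^ ((1:ℝ)/2)) ^ (-(1/s))) :
    (fun n : ℕ => Real.exp (2*b / (h n) ^ s + 2*a / (h n) ^ (s/2)) * (h n) ^ α)
      =O[atTop] (fun n : ℕ => (n : ℝ)) := by
  have hlog : Tendsto (fun n : ℕ => log n) atTop atTop :=
    tendsto_log_atTop.comp tendsto_natCast_atTop_atTop
  have hfactor := ((tendsto_bandwidth_factor (α / s) b0).comp hlog).const_mul ((2 * b) ^ (α / s))
  have hrate : ∀ᶠ n : ℕ in atTop,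
      (n : ℝ) * ((2 * b) ^ (α / s) * ((log n / logRate (α / s) b0 (log n)) ^ (α / s) *
        exp (b0 * (√(log n) - √(logRate (α / s) b0 (log n))))))
      = exp (2 * b / h n ^ s + 2 * a / h n ^ (s / 2)) * h n ^ α := by
    filter_upwards [eventually_gt_atTop 0, hlog.eventually_gt_atTop 0,
      hlog.eventually (eventually_logRate_pos (α / s) b0)] with n hn ht hL
    rw [exp_bandwidth_eq (by positivity) hs.ne' hb0 ht hL (by rw [hh n, ← sqrt_eq_rpow]; rfl),
      exp_log (by exact_mod_cast hn)]
    ring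
  exact ((isBigO_refl _ _).mul (hfactor.isBigO_one ℝ)).congr' hrate (by simp)

/-- The case `k = 0`, `λ = 1/2` (`r = s/2`): with `b_0 = -2a/(2b)^{1/2}` and
`h n = (2b)^{1/s}[log n + (α/s) log log n + b_0 (log n)^{1/2}]^{-1/s}`,
one has `exp(2b/h^s + 2a/h^{s/2}) h^α = O(n)`. -/
theorem stmt13 (a b s α : ℝ) (ha : 0 < a) (hb : 0 < b) (hs : 0 < s)
    (b0 : ℝ) (hb0 : b0 = -(2*a) / (2*b) ^ ((1:ℝ)/2))
    (h : ℕ → ℝ)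
    (hh : ∀ n : ℕ, h n = (2*b) ^ (1/s) *
      (Real.log n + (α/s) * Real.log (Real.log n)
        + b0 * (Real.log n) ^ ((1:ℝ)/2)) ^ (-(1/s))) :
    (fun n : ℕ => Real.exp (2*b / (h n) ^ s + 2*a / (h n) ^ (s/2)) * (h n) ^ α)
      =O[atTop] (fun n : ℕ => (n : ℝ)) :=
  stmt13_general a b s α hb hs b0 hb0 h hh
end
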